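/- arXiv:1504.02947 — 4 statements merged into one kernel-verified Lean document; each statement's English description precedes it below -/
import Mathlib

section
/- For every weighted game arena with partial observation G, every threshold ν ∈ ℚ and every window size bound lmax ≥ 1: Fix(ν,lmax) ⊆ MPInf(ν), Bnd(ν) ⊆ MPInf(ν), and MPInf(ν) ⊆ MPSup(ν). In particular every play all of whose concretizations eventually have all their windows (of some bounded length) closed with average weight at least ν has mean-payoff (liminf) at least ν on every concretization. -/
open scoped Classical

/-- A weighted game arena with partial observation. -/
structure WGA where
  Q : Type
  fintypeQ : Fintype Q
  qI : Q
  A : Type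
  fintypeA : Fintype A
  nonemptyA : Nonempty A
  Δ : Q → A → Q → Prop
  total : ∀ q a, ∃ q', Δ q a q'
  w : Q → A → Q → ℤ
  Obs : Set (Set Q)
  obs_empty : ∅ ∉ Obs
  obs_partition : ∀ q : Q, ∃! o, o ∈ Obs ∧ q ∈ o

attribute [instance] WGA.fintypeQ WGA.fintypeA WGA.nonemptyA

namespace WGA

variable (G : WGA)

/-- A concrete path compatible with the given sequences of observations and actions. -/
def Concretizes (obs : ℕ → Set G.Q) (act : ℕ → G.A) (π : ℕ → G.Q) : Prop :=
  (∀ i, π i ∈ obs i) ∧ ∀ i, G.Δ (π i) (act i) (π (i + 1))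

/-- Plays: infinite abstract paths starting at the initial observation. -/
def IsPlay (obs : ℕ → Set G.Q) (act : ℕ → G.A) : Prop :=
  (∀ i, obs i ∈ G.Obs) ∧ G.qI ∈ obs 0 ∧ ∃ π, G.Concretizes obs act π

/-- Sum of the `j` transition weights starting at position `i`. -/
def winSum (π : ℕ → G.Q) (act : ℕ → G.A) (i j : ℕ) : ℤ :=
  ∑ k ∈ Finset.range j, G.w (π (i + k)) (act (i + k)) (π (i + k + 1))

/-- Good window at position `i` with window size bound `lmax`. -/
def GW (ν : ℚ) (i lmax : ℕ) (π : ℕ → G.Q) (act : ℕ → G.A) : Prop :=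
  ∃ j, 1 ≤ j ∧ j ≤ lmax ∧ ν ≤ (G.winSum π act i j : ℚ) / (j : ℚ)

def DirFix (ν : ℚ) (lmax : ℕ) (obs : ℕ → Set G.Q) (act : ℕ → G.A) : Prop :=
  ∀ π, G.Concretizes obs act π → ∀ i, G.GW ν i lmax π act

def UFix (ν : ℚ) (lmax : ℕ) (obs : ℕ → Set G.Q) (act : ℕ → G.A) : Prop :=
  ∃ i, ∀ π, G.Concretizes obs act π → ∀ j, i ≤ j → G.GW ν j lmax π act

def Fix (ν : ℚ) (lmax : ℕ) (obs : ℕ → Set G.Q) (act : ℕ → G.A) : Prop :=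
  ∀ π, G.Concretizes obs act π → ∃ i, ∀ j, i ≤ j → G.GW ν j lmax π act

def UDirBnd (ν : ℚ) (obs : ℕ → Set G.Q) (act : ℕ → G.A) : Prop :=
  ∃ lmax, 1 ≤ lmax ∧ ∀ π, G.Concretizes obs act π → ∀ i, G.GW ν i lmax π act

def DirBnd (ν : ℚ) (obs : ℕ → Set G.Q) (act : ℕ → G.A) : Prop :=
  ∀ π, G.Concretizes obs act π → ∃ lmax, 1 ≤ lmax ∧ ∀ i, G.GW ν i lmax π act

def UBnd (ν : ℚ) (obs : ℕ → Set G.Q) (act : ℕ → G.A) : Prop :=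
  ∃ lmax, 1 ≤ lmax ∧ ∃ i, ∀ π, G.Concretizes obs act π → ∀ j, i ≤ j → G.GW ν j lmax π act

def Bnd (ν : ℚ) (obs : ℕ → Set G.Q) (act : ℕ → G.A) : Prop :=
  ∀ π, G.Concretizes obs act π → ∃ lmax, 1 ≤ lmax ∧ ∃ i, ∀ j, i ≤ j → G.GW ν j lmax π act

noncomputable def MPinf (π : ℕ → G.Q) (act : ℕ → G.A) : ℝ :=
  Filter.liminf (fun n : ℕ => (G.winSum π act 0 n : ℝ) / (n : ℝ)) Filter.atTop

noncomputable def MPsup (π : ℕ → G.Q) (act : ℕ → G.A) : ℝ :=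
  Filter.limsup (fun n : ℕ => (G.winSum π act 0 n : ℝ) / (n : ℝ)) Filter.atTop

def MPInfObj (ν : ℚ) (obs : ℕ → Set G.Q) (act : ℕ → G.A) : Prop :=
  ∀ π, G.Concretizes obs act π → (ν : ℝ) ≤ G.MPinf π act

def MPSupObj (ν : ℚ) (obs : ℕ → Set G.Q) (act : ℕ → G.A) : Prop :=
  ∀ π, G.Concretizes obs act π → (ν : ℝ) ≤ G.MPsup π act

/-- The finite history (prefix) of a play after `n` steps, ending with `obs n`. -/
def hist (obs : ℕ → Set G.Q) (act : ℕ → G.A) (n : ℕ) : List (Set G.Q × G.A) :=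
  (List.range n).map fun i => (obs i, act i)

/-- A play is consistent with an observation-based strategy of Eve. -/
def Consistent (str : List (Set G.Q × G.A) → Set G.Q → G.A)
    (obs : ℕ → Set G.Q) (act : ℕ → G.A) : Prop :=
  ∀ n, act n = str (G.hist obs act n) (obs n)

/-- Eve wins an objective if some observation-based strategy forces it on all plays. -/
def Wins (V : (ℕ → Set G.Q) → (ℕ → G.A) → Prop) : Prop :=
  ∃ str : List (Set G.Q × G.A) → Set G.Q → G.A,
    ∀ obs act, G.IsPlay obs act → G.Consistent str obs act → V obs act

/-- σ-successors of a set of states. -/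
def postSet (σ : G.A) (s : Set G.Q) : Set G.Q := {q' | ∃ q ∈ s, G.Δ q σ q'}

end WGA

/-!
Weights are bounded, say by `B`. From position `i` on, good windows of length at most `lmax`
can be chained greedily, so the total weight of the first `n` steps is at least `ν * n` minus
a constant (the prefix before `i` and the unfinished last window contribute `O(1)`); dividing
by `n`, the liminf of the running averages is at least `ν`. Bounded weights also keep the
running averages bounded, which gives liminf ≤ limsup.
-/

open Filter Topology Finset

section WindowAverages

variable {x : ℕ → ℝ} {B ν : ℝ} {L i : ℕ}

lemma sub_mul_le_add_of_forall_sub_le_succ {P : ℕ → ℝ} (hstep : ∀ n, P n - B ≤ P (n + 1))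
    (m k : ℕ) : P m - k * B ≤ P (m + k) := by
  induction k with
  | zero => simp
  | succ k ih =>
    have := hstep (m + k)
    push_cast
    rw [← add_assoc]
    linarith

lemma exists_forall_ge_le_of_windows {P : ℕ → ℝ} (hstep : ∀ n, P n - B ≤ P (n + 1))
    (hwin : ∀ j, i ≤ j → ∃ l, 1 ≤ l ∧ l ≤ L ∧ P j ≤ P (j + l)) :
    ∃ c, ∀ n, i ≤ n → c ≤ P n := by
  -- the window endpoints reached greedily from `i` cover every `n ≥ i` with gaps shorter than `L`
  have hcover : ∀ n, i ≤ n → ∃ m, i ≤ m ∧ m ≤ n ∧ n < m + L ∧ P i ≤ P m := by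
    intro n hn
    induction n, hn using Nat.le_induction with
    | base =>
      obtain ⟨l, hl1, hlL, -⟩ := hwin i le_rfl
      exact ⟨i, le_rfl, le_rfl, by omega, le_rfl⟩
    | succ n hin ih =>
      obtain ⟨m, him, hmn, hnm, hPm⟩ := ih
      by_cases hkeep : n + 1 < m + L
      · exact ⟨m, him, by omega, hkeep, hPm⟩
      obtain ⟨l, hl1, hlL, hPl⟩ := hwin m him
      exact ⟨m + l, by omega, by omega, by omega, hPm.trans hPl⟩
  refine ⟨P i - L * |B|, fun n hn => ?_⟩
  obtain ⟨m, -, hmn, hnm, hPm⟩ := hcover n hn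
  obtain ⟨k, rfl⟩ := Nat.exists_eq_add_of_le hmn
  have hkL : (k : ℝ) * B ≤ L * |B| :=
    calc (k : ℝ) * B ≤ k * |B| := mul_le_mul_of_nonneg_left (le_abs_self B) k.cast_nonneg
      _ ≤ L * |B| := by gcongr; omega
  linarith [sub_mul_le_add_of_forall_sub_le_succ hstep m k]

noncomputable def runningAverage (x : ℕ → ℝ) (n : ℕ) : ℝ := (∑ k ∈ range n, x k) / n

lemma abs_runningAverage_le (hx : ∀ k, |x k| ≤ B) (n : ℕ) : |runningAverage x n| ≤ B := by
  rcases n.eq_zero_or_pos with rfl | hn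
  · simpa [runningAverage] using (abs_nonneg _).trans (hx 0)
  rw [runningAverage, abs_div, Nat.abs_cast, div_le_iff₀ (by exact_mod_cast hn)]
  calc |∑ k ∈ range n, x k| ≤ ∑ k ∈ range n, |x k| := abs_sum_le_sum_abs _ _
    _ ≤ ∑ _k ∈ range n, B := sum_le_sum fun k _ => hx k
    _ = B * n := by simp [mul_comm]

lemma isBoundedUnder_le_runningAverage (hx : ∀ k, |x k| ≤ B) :
    IsBoundedUnder (· ≤ ·) atTop (runningAverage x) :=
  (isBoundedUnder_le_abs.mp (isBoundedUnder_of ⟨B, abs_runningAverage_le hx⟩)).1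

lemma isBoundedUnder_ge_runningAverage (hx : ∀ k, |x k| ≤ B) :
    IsBoundedUnder (· ≥ ·) atTop (runningAverage x) :=
  (isBoundedUnder_le_abs.mp (isBoundedUnder_of ⟨B, abs_runningAverage_le hx⟩)).2

lemma liminf_runningAverage_le_limsup (hx : ∀ k, |x k| ≤ B) :
    liminf (runningAverage x) atTop ≤ limsup (runningAverage x) atTop :=
  liminf_le_limsup (isBoundedUnder_le_runningAverage hx) (isBoundedUnder_ge_runningAverage hx)

lemma le_liminf_runningAverage_of_windows (hx : ∀ k, |x k| ≤ B)
    (hwin : ∀ j, i ≤ j → ∃ l, 1 ≤ l ∧ l ≤ L ∧ ν * l ≤ ∑ k ∈ range l, x (j + k)) :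
    ν ≤ liminf (runningAverage x) atTop := by
  -- subtracting `ν` from every weight turns the good windows into non-decreasing ones
  obtain ⟨c, hc⟩ := exists_forall_ge_le_of_windows (P := fun n => ∑ k ∈ range n, x k - ν * n)
    (B := B + ν) (L := L) (i := i)
    (fun n => by
      simp only [sum_range_succ, Nat.cast_succ]
      linarith [neg_abs_le (x n), hx n])
    (fun j hj => by
      obtain ⟨l, hl1, hlL, hl⟩ := hwin j hj
      refine ⟨l, hl1, hlL, ?_⟩
      simp only [sum_range_add, Nat.cast_add]
      linarith)
  have hlower : ∀ᶠ n : ℕ in atTop, ν + c / n ≤ runningAverage x n := by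
    filter_upwards [eventually_ge_atTop i, eventually_gt_atTop 0] with n hin hn
    have hn' : (0 : ℝ) < n := by exact_mod_cast hn
    rw [runningAverage, le_div_iff₀ hn', add_mul, div_mul_cancel₀ _ hn'.ne']
    linarith [hc n hin]
  have hlim : Tendsto (fun n : ℕ => ν + c / n) atTop (𝓝 ν) := by
    simpa using tendsto_const_nhds.add (tendsto_const_div_atTop_nhds_zero_nat c)
  calc ν = liminf (fun n : ℕ => ν + c / n) atTop := hlim.liminf_eq.symm
    _ ≤ liminf (runningAverage x) atTop :=
      liminf_le_liminf hlower hlim.isBoundedUnder_ge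
        (isBoundedUnder_le_runningAverage hx).isCoboundedUnder_ge

end WindowAverages

namespace WGA

variable (G : WGA) (π : ℕ → G.Q) (act : ℕ → G.A)

def weight (k : ℕ) : ℝ := G.w (π k) (act k) (π (k + 1))

lemma cast_winSum (i j : ℕ) :
    (G.winSum π act i j : ℝ) = ∑ k ∈ range j, G.weight π act (i + k) := by
  simp [winSum, weight, add_assoc]

lemma exists_abs_weight_le : ∃ B, ∀ k, |G.weight π act k| ≤ B := by
  obtain ⟨B, hB⟩ :=
    (Set.finite_range fun t : G.Q × G.A × G.Q => |(G.w t.1 t.2.1 t.2.2 : ℝ)|).bddAbove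
  exact ⟨B, fun k => hB ⟨(π k, act k, π (k + 1)), rfl⟩⟩

lemma MPinf_eq_liminf_runningAverage :
    G.MPinf π act = liminf (runningAverage (G.weight π act)) atTop := by
  simp only [MPinf, cast_winSum, zero_add]
  rfl

lemma MPsup_eq_limsup_runningAverage :
    G.MPsup π act = limsup (runningAverage (G.weight π act)) atTop := by
  simp only [MPsup, cast_winSum, zero_add]
  rfl

variable {G π act}

lemma GW.exists_le_sum_weight {ν : ℚ} {i lmax : ℕ} (h : G.GW ν i lmax π act) :
    ∃ l, 1 ≤ l ∧ l ≤ lmax ∧ (ν : ℝ) * l ≤ ∑ k ∈ range l, G.weight π act (i + k) := by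
  obtain ⟨l, hl1, hlL, hν⟩ := h
  rw [le_div_iff₀ (by exact_mod_cast hl1)] at hν
  refine ⟨l, hl1, hlL, ?_⟩
  rw [← cast_winSum]
  exact_mod_cast hν

lemma le_MPinf_of_forall_ge_GW {ν : ℚ} {i lmax : ℕ} (h : ∀ j, i ≤ j → G.GW ν j lmax π act) :
    (ν : ℝ) ≤ G.MPinf π act := by
  obtain ⟨B, hB⟩ := G.exists_abs_weight_le π act
  rw [MPinf_eq_liminf_runningAverage]
  exact le_liminf_runningAverage_of_windows hB fun j hj => (h j hj).exists_le_sum_weight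

variable (G π act)

lemma MPinf_le_MPsup : G.MPinf π act ≤ G.MPsup π act := by
  obtain ⟨B, hB⟩ := G.exists_abs_weight_le π act
  rw [MPinf_eq_liminf_runningAverage, MPsup_eq_limsup_runningAverage]
  exact liminf_runningAverage_le_limsup hB

end WGA

theorem wmp_implies_mp_general (G : WGA) (ν : ℚ) (lmax : ℕ)
    (obs : ℕ → Set G.Q) (act : ℕ → G.A) :
    (G.Fix ν lmax obs act → G.MPInfObj ν obs act) ∧
    (G.Bnd ν obs act → G.MPInfObj ν obs act) ∧
    (G.MPInfObj ν obs act → G.MPSupObj ν obs act) := by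
  refine ⟨fun hfix π hπ => ?_, fun hbnd π hπ => ?_, fun hinf π hπ => ?_⟩
  · obtain ⟨i, hi⟩ := hfix π hπ
    exact WGA.le_MPinf_of_forall_ge_GW hi
  · obtain ⟨_, -, i, hi⟩ := hbnd π hπ
    exact WGA.le_MPinf_of_forall_ge_GW hi
  · exact (hinf π hπ).trans (G.MPinf_le_MPsup π act)

/-- the window mean-payoff objectives imply the mean-payoff objectives. -/
theorem wmp_implies_mp (G : WGA) (ν : ℚ) (lmax : ℕ) (hlmax : 1 ≤ lmax)
    (obs : ℕ → Set G.Q) (act : ℕ → G.A) (hplay : G.IsPlay obs act) :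
    (G.Fix ν lmax obs act → G.MPInfObj ν obs act) ∧
    (G.Bnd ν obs act → G.MPInfObj ν obs act) ∧
    (G.MPInfObj ν obs act → G.MPSupObj ν obs act) :=
  wmp_implies_mp_general G ν lmax obs act
end

section
/- Consider the blind WGA G with states Q = {q_0, q_1}, initial state q_0, a single action a, the single observation {q_0,q_1}, and transitions (q_0,a,q_0) of weight 0, (q_0,a,q_1) of weight −1, and (q_1,a,q_1) of weight 0. Then for every lmax ≥ 1, every play ψ of G satisfies ψ ∈ Fix(0,lmax) and ψ ∉ UFix(0,lmax). Hence the inclusion UFix(ν,lmax) ⊆ Fix(ν,lmax) is strict in general. -/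
open scoped Classical

/-- The blind WGA of Figure 3: states `q₀ = false`, `q₁ = true`, a single action,
transitions `q₀ →0 q₀`, `q₀ →(−1) q₁`, `q₁ →0 q₁`, and a single observation. -/
def G2 : WGA where
  Q := Bool
  fintypeQ := inferInstance
  qI := false
  A := Unit
  fintypeA := inferInstance
  nonemptyA := inferInstance
  Δ := fun q _ q' => q = false ∨ q' = true
  total := fun _ _ => ⟨true, Or.inr rfl⟩
  w := fun q _ q' => if q = false ∧ q' = true then (-1 : ℤ) else 0
  Obs := {Set.univ}
  obs_empty := fun h => Set.empty_ne_univ (Set.mem_singleton_iff.mp h)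
  obs_partition := fun q =>
    ⟨Set.univ, ⟨rfl, Set.mem_univ q⟩, fun o ho => Set.mem_singleton_iff.mp ho.1⟩

/-!
Every concrete path of `G2` is a monotone sequence of booleans, hence eventually constant,
after which every window of length one has weight `0`: this gives `Fix`. But for any
candidate start `i`, the path that stays in `q₀` up to step `i` and then moves to `q₁` has
window sum `-1` at `i` for every window length, so no uniform start exists and `UFix` fails.
-/

namespace WGA

variable {G : WGA} {ν : ℚ} {lmax : ℕ} {obs : ℕ → Set G.Q} {act : ℕ → G.A}

@[simp]
theorem winSum_one (π : ℕ → G.Q) (i : ℕ) :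
    G.winSum π act i 1 = G.w (π i) (act i) (π (i + 1)) := by
  simp [winSum]

theorem GW_of_le_w {π : ℕ → G.Q} {i : ℕ} (hlmax : 1 ≤ lmax)
    (h : ν ≤ G.w (π i) (act i) (π (i + 1))) : G.GW ν i lmax π act :=
  ⟨1, le_rfl, hlmax, by simpa using h⟩

theorem not_GW_zero_of_winSum_neg {π : ℕ → G.Q} {i : ℕ}
    (h : ∀ j, 1 ≤ j → G.winSum π act i j < 0) : ¬ G.GW 0 i lmax π act := by
  rintro ⟨j, hj, -, hle⟩
  have hneg : (G.winSum π act i j : ℚ) / j < 0 :=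
    div_neg_of_neg_of_pos (by exact_mod_cast h j hj) (by exact_mod_cast hj)
  linarith

theorem fix_of_eventually_le_w (hlmax : 1 ≤ lmax)
    (h : ∀ π, G.Concretizes obs act π →
      ∃ n, ∀ j, n ≤ j → ν ≤ G.w (π j) (act j) (π (j + 1))) :
    G.Fix ν lmax obs act := fun π hπ =>
  (h π hπ).imp fun _ hn j hj => GW_of_le_w hlmax (hn j hj)

theorem not_uFix_of_forall_exists_not_GW
    (h : ∀ i, ∃ π, G.Concretizes obs act π ∧ ¬ G.GW ν i lmax π act) :
    ¬ G.UFix ν lmax obs act := by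
  rintro ⟨i, hi⟩
  obtain ⟨π, hπ, hbad⟩ := h i
  exact hbad (hi π hπ i le_rfl)

end WGA

namespace G2

theorem Δ_iff {q q' : Bool} {a : Unit} : G2.Δ q a q' ↔ q ≤ q' := by
  cases q <;> cases q' <;> simp [G2]

theorem w_self (q : G2.Q) (a : G2.A) : G2.w q a q = 0 := by
  cases q <;> simp [G2]

theorem concretizes_iff_monotone {obs : ℕ → Set G2.Q} {act : ℕ → G2.A}
    (hplay : G2.IsPlay obs act) (π : ℕ → Bool) :
    G2.Concretizes obs act π ↔ Monotone π := by
  have hobs (i : ℕ) : π i ∈ obs i := by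
    rw [show obs i = Set.univ from hplay.1 i]
    trivial
  exact ⟨fun hπ => monotone_nat_of_le_succ fun n => Δ_iff.1 (hπ.2 n),
    fun hπ => ⟨hobs, fun n => Δ_iff.2 (hπ n.le_succ)⟩⟩

def jumpAt (i : ℕ) : ℕ → Bool := fun n => decide (i < n)

theorem monotone_jumpAt (i : ℕ) : Monotone (jumpAt i) := fun _ _ hmn =>
  Bool.le_iff_imp.2 fun h => by simp only [jumpAt, decide_eq_true_eq] at h ⊢; omega

theorem winSum_jumpAt (i : ℕ) (act : ℕ → G2.A) {j : ℕ} (hj : 1 ≤ j) :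
    G2.winSum (jumpAt i) act i j = -1 := by
  obtain ⟨j, rfl⟩ := Nat.exists_eq_add_of_le' hj
  simp [WGA.winSum, jumpAt, G2]

end G2

/-- in the blind arena `G2`, for every `lmax ≥ 1`, every play is in
`Fix(0,lmax)` but not in `UFix(0,lmax)`; hence `UFix ⊆ Fix` is strict in general. -/
theorem fix_neq_ufix (lmax : ℕ) (hlmax : 1 ≤ lmax)
    (obs : ℕ → Set G2.Q) (act : ℕ → G2.A) (hplay : G2.IsPlay obs act) :
    G2.Fix 0 lmax obs act ∧ ¬ G2.UFix 0 lmax obs act := by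
  constructor
  · refine WGA.fix_of_eventually_le_w hlmax fun π hπ => ?_
    have hmono := (G2.concretizes_iff_monotone hplay π).1 hπ
    obtain ⟨n, hn : ∀ m, n ≤ m → π n = π m⟩ :=
      WellFoundedGT.monotone_chain_condition (α := Bool) ⟨π, hmono⟩
    refine ⟨n, fun j hj => ?_⟩
    rw [← hn (j + 1) (by omega), hn j hj, G2.w_self, Int.cast_zero]
  · refine WGA.not_uFix_of_forall_exists_not_GW fun i =>
      ⟨G2.jumpAt i, (G2.concretizes_iff_monotone hplay _).2 (G2.monotone_jumpAt i), ?_⟩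
    exact WGA.not_GW_zero_of_winSum_neg fun j hj => by
      rw [G2.winSum_jumpAt i act hj]
      norm_num
end

section
/- Let G be a WGA with W = max{|w(t)| : t ∈ Δ}, let ε > 0 be a rational number, and suppose Eve has a winning strategy λ for the objective MPInf(ε) (or for MPSup(ε)) that has finite memory with memory set M. Then the same strategy λ is winning for Eve for the objective DirFix(0, μ) where μ = ⌈(W · |M| · |Q| / ε) · |M| · |Q|⌉; that is, every play consistent with λ satisfies: every concretization π ∈ γ(ψ) satisfies π ∈ GW(0, i, μ) for all i ≥ 0. -/
open scoped Classical

/-!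
A finite-memory strategy turns every consistent play into a walk through the finite set of
configurations `(memory state, game state)`. A segment of a consistent play between two equal
configurations can be repeated forever, or cut out, and the result is again a play consistent
with the strategy (the observation is determined by the state). Repeating it gives a play whose
mean payoff is the average weight of the segment, so every such cycle has weight at least `ε`
times its length. Cutting out cycles one at a time, a window of length `L` has weight at least
`ε L - (ε + W) (|M| |Q| - 1)`; this is nonnegative for `L ≥ W |M|² |Q|² / ε`, because `ε ≤ W`.
-/

open Filter Topology Finset

theorem exists_add_eq_of_card_lt {α : Type*} [Fintype α] (c : ℕ → α) (i : ℕ) :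
    ∃ a ℓ, i ≤ a ∧ 0 < ℓ ∧ a + ℓ ≤ i + Fintype.card α ∧ c (a + ℓ) = c a := by
  obtain ⟨x, y, hxy, hc⟩ := Fintype.exists_ne_map_eq_of_card_lt
    (fun k : Fin (Fintype.card α + 1) => c (i + k)) (by simp)
  rcases Nat.lt_or_gt_of_ne (Fin.val_ne_of_ne hxy) with h | h
  · exact ⟨i + x, y - x, by omega, by omega, by omega,
      by rw [show i + x + (y - x) = i + y by omega, hc]⟩
  · exact ⟨i + y, x - y, by omega, by omega, by omega,
      by rw [show i + y + (x - y) = i + x by omega, hc]⟩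

theorem tendsto_div_atTop_of_add_eq_add {S : ℕ → ℝ} {a ℓ : ℕ} {C : ℝ} (hℓ : 0 < ℓ)
    (hS : ∀ n, a ≤ n → S (n + ℓ) = S n + C) :
    Tendsto (fun n : ℕ => S n / n) atTop (𝓝 (C / ℓ)) := by
  set g : ℕ → ℝ := fun n => S n - n * (C / ℓ) with hg_def
  have hg : ∀ n, a ≤ n → g (n + ℓ) = g n := by
    intro n hn
    simp only [hg_def, hS n hn]
    push_cast
    field_simp
    ring
  have hbdd : ∀ n, |g n| ≤ ∑ m ∈ range (a + ℓ), |g m| := by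
    intro n
    induction n using Nat.strong_induction_on with
    | _ n ih =>
      by_cases hn : n < a + ℓ
      · exact single_le_sum (fun m _ => abs_nonneg (g m)) (mem_range.2 hn)
      · obtain ⟨m, rfl⟩ : ∃ m, n = m + ℓ := ⟨n - ℓ, by omega⟩
        rw [hg m (by omega)]
        exact ih m (by omega)
  have hg0 : Tendsto (fun n : ℕ => g n / n) atTop (𝓝 0) := by
    refine squeeze_zero_norm (a := fun n : ℕ => (∑ m ∈ range (a + ℓ), |g m|) / n)
      (fun n => ?_) (tendsto_const_div_atTop_nhds_zero_nat _)
    rw [Real.norm_eq_abs, abs_div, Nat.abs_cast]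
    exact div_le_div_of_nonneg_right (hbdd n) n.cast_nonneg
  refine (zero_add (C / ℓ) ▸ hg0.add_const (C / ℓ)).congr' ?_
  filter_upwards [eventually_ne_atTop 0] with n hn
  simp only [hg_def]
  field_simp
  ring

/-- Along `f`, the sequence `c ∘ f` only makes moves that `c` makes: it starts like `c`, and
after position `f n` comes one carrying the same value as `f n + 1`. -/
def IsSplice {β : Type*} (c : ℕ → β) (f : ℕ → ℕ) : Prop :=
  c (f 0) = c 0 ∧ ∀ n, c (f (n + 1)) = c (f n + 1)

theorem IsSplice.fst {β γ : Type*} {c : ℕ → β} {d : ℕ → γ} {f : ℕ → ℕ}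
    (hf : IsSplice (fun n => (c n, d n)) f) : IsSplice c f :=
  ⟨congrArg Prod.fst hf.1, fun n => congrArg Prod.fst (hf.2 n)⟩

theorem IsSplice.snd {β γ : Type*} {c : ℕ → β} {d : ℕ → γ} {f : ℕ → ℕ}
    (hf : IsSplice (fun n => (c n, d n)) f) : IsSplice d f :=
  ⟨congrArg Prod.snd hf.1, fun n => congrArg Prod.snd (hf.2 n)⟩

def loopIndex (a ℓ : ℕ) : ℕ → ℕ
  | 0 => 0
  | n + 1 => if loopIndex a ℓ n + 1 = a + ℓ then a else loopIndex a ℓ n + 1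

theorem loopIndex_of_lt {a ℓ n : ℕ} (hn : n < a + ℓ) : loopIndex a ℓ n = n := by
  induction n with
  | zero => rfl
  | succ n ih => rw [loopIndex, ih (by omega), if_neg (by omega)]

theorem loopIndex_add {a ℓ n : ℕ} (hℓ : 0 < ℓ) (hn : a ≤ n) :
    loopIndex a ℓ (n + ℓ) = loopIndex a ℓ n := by
  induction n, hn using Nat.le_induction with
  | base =>
    obtain ⟨k, hk⟩ : ∃ k, a + ℓ = k + 1 := ⟨a + ℓ - 1, by omega⟩
    rw [hk, loopIndex, loopIndex_of_lt (by omega), if_pos hk.symm,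
      loopIndex_of_lt (by omega)]
  | succ n _ ih => rw [Nat.add_right_comm, loopIndex, ih, ← loopIndex]

theorem isSplice_loopIndex {β : Type*} {c : ℕ → β} {a ℓ : ℕ} (hc : c (a + ℓ) = c a) :
    IsSplice c (loopIndex a ℓ) := by
  refine ⟨rfl, fun n => ?_⟩
  rw [loopIndex]
  split_ifs with h
  · rw [h, hc]
  · rfl

theorem sum_range_loopIndex_add {β : Type*} [AddCommMonoid β] (t : ℕ → β) {a ℓ n : ℕ}
    (hℓ : 0 < ℓ) (hn : a ≤ n) :
    ∑ k ∈ range (n + ℓ), t (loopIndex a ℓ k)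
      = ∑ k ∈ range n, t (loopIndex a ℓ k) + ∑ k ∈ range ℓ, t (a + k) := by
  induction n, hn using Nat.le_induction with
  | base =>
    rw [sum_range_add]
    congr 1
    exact sum_congr rfl fun k hk => by
      rw [loopIndex_of_lt (by rw [mem_range] at hk; omega)]
  | succ n hn ih =>
    rw [Nat.add_right_comm, sum_range_succ, ih, sum_range_succ, loopIndex_add hℓ hn]
    abel

def skipIndex (a ℓ n : ℕ) : ℕ := if n < a then n else n + ℓ

theorem isSplice_skipIndex {β : Type*} {c : ℕ → β} {a ℓ : ℕ} (hc : c (a + ℓ) = c a) :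
    IsSplice c (skipIndex a ℓ) := by
  refine ⟨?_, fun n => ?_⟩
  · unfold skipIndex
    split_ifs with h
    · rfl
    · obtain rfl : a = 0 := by omega
      exact hc
  · unfold skipIndex
    split_ifs with h₁ h₂ h₂
    · rfl
    · omega
    · rw [show n + 1 = a by omega, hc]
    · rw [Nat.add_right_comm]

theorem sum_range_skipIndex_add {β : Type*} [AddCommMonoid β] (t : ℕ → β) {a ℓ i n : ℕ}
    (hia : i ≤ a) (han : a ≤ i + n) :
    ∑ k ∈ range n, t (skipIndex a ℓ (i + k)) + ∑ k ∈ range ℓ, t (a + k)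
      = ∑ k ∈ range (n + ℓ), t (i + k) := by
  obtain ⟨d, rfl⟩ : ∃ d, a = i + d := ⟨a - i, by omega⟩
  obtain ⟨e, rfl⟩ : ∃ e, n = d + e := ⟨n - d, by omega⟩
  rw [sum_range_add, show d + e + ℓ = d + ℓ + e by omega, sum_range_add, sum_range_add]
  have h₁ : ∑ k ∈ range d, t (skipIndex (i + d) ℓ (i + k)) = ∑ k ∈ range d, t (i + k) :=
    sum_congr rfl fun k hk => by rw [skipIndex, if_pos (by simp at hk; omega)]
  have h₂ : ∑ k ∈ range e, t (skipIndex (i + d) ℓ (i + (d + k)))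
      = ∑ k ∈ range e, t (i + (d + ℓ + k)) :=
    sum_congr rfl fun k _ => by rw [skipIndex, if_neg (by omega)]; congr 1; omega
  simp only [h₁, h₂, add_assoc]
  abel

def memSeq {M O : Type*} (m0 : M) (αu : M → O → M) (obs : ℕ → O) : ℕ → M
  | 0 => m0
  | n + 1 => αu (memSeq m0 αu obs n) (obs n)

theorem memSeq_comp {M O : Type*} {m0 : M} {αu : M → O → M} {obs : ℕ → O} {f : ℕ → ℕ}
    (hf : IsSplice (memSeq m0 αu obs) f) (n : ℕ) :
    memSeq m0 αu (obs ∘ f) n = memSeq m0 αu obs (f n) := by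
  induction n with
  | zero => exact hf.1.symm
  | succ n ih => rw [memSeq, ih, hf.2 n, memSeq, Function.comp_apply]

def memoryStrategy {M O A : Type*} (m0 : M) (αu : M → O → M) (αo : M → O → A) :
    List (O × A) → O → A :=
  fun l o => αo (l.foldl (fun m p => αu m p.1) m0) o

namespace WGA

variable (G : WGA) {M : Type} {m0 : M} {αu : M → Set G.Q → M} {αo : M → Set G.Q → G.A}

def stepWeight (π : ℕ → G.Q) (act : ℕ → G.A) (k : ℕ) : ℤ :=
  G.w (π k) (act k) (π (k + 1))

theorem winSum_eq_sum_stepWeight (π : ℕ → G.Q) (act : ℕ → G.A) (i j : ℕ) :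
    G.winSum π act i j = ∑ k ∈ range j, G.stepWeight π act (i + k) :=
  rfl

def IsOutcome (str : List (Set G.Q × G.A) → Set G.Q → G.A) (obs : ℕ → Set G.Q)
    (act : ℕ → G.A) (π : ℕ → G.Q) : Prop :=
  G.IsPlay obs act ∧ G.Consistent str obs act ∧ G.Concretizes obs act π

/-- The common weakening of the objectives `MPInf(ε)` and `MPSup(ε)`: it constrains only the
plays whose average weight converges, where liminf and limsup agree. -/
def ForcesMeanPayoff (str : List (Set G.Q × G.A) → Set G.Q → G.A) (ε : ℚ) : Prop :=
  ∀ obs act π, G.IsOutcome str obs act π → ∀ D : ℝ,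
    Tendsto (fun n : ℕ => (G.winSum π act 0 n : ℝ) / n) atTop (𝓝 D) → (ε : ℝ) ≤ D

variable {G}

theorem obs_eq_of_mem {o o' : Set G.Q} {q : G.Q} (ho : o ∈ G.Obs) (ho' : o' ∈ G.Obs)
    (hq : q ∈ o) (hq' : q ∈ o') : o = o' :=
  (G.obs_partition q).unique ⟨ho, hq⟩ ⟨ho', hq'⟩

theorem foldl_hist (obs : ℕ → Set G.Q) (act : ℕ → G.A) (n : ℕ) :
    (G.hist obs act n).foldl (fun m p => αu m p.1) m0 = memSeq m0 αu obs n := by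
  induction n with
  | zero => rfl
  | succ n ih =>
    rw [hist, List.range_succ, List.map_append, List.foldl_append, ← hist, ih]
    rfl

theorem consistent_memoryStrategy_iff {obs : ℕ → Set G.Q} {act : ℕ → G.A} :
    G.Consistent (memoryStrategy m0 αu αo) obs act ↔
      ∀ n, act n = αo (memSeq m0 αu obs n) (obs n) := by
  simp only [Consistent, memoryStrategy, foldl_hist]

theorem IsOutcome.comp {obs : ℕ → Set G.Q} {act : ℕ → G.A} {π : ℕ → G.Q} {f : ℕ → ℕ}
    (hout : G.IsOutcome (memoryStrategy m0 αu αo) obs act π)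
    (hf : IsSplice (fun n => (memSeq m0 αu obs n, π n)) f) :
    G.IsOutcome (memoryStrategy m0 αu αo) (obs ∘ f) (act ∘ f) (π ∘ f) := by
  obtain ⟨⟨hobs, hqI, -⟩, hcons, hπobs, hπΔ⟩ := hout
  have hmem := hf.fst
  have hπ := hf.snd
  have hconc : G.Concretizes (obs ∘ f) (act ∘ f) (π ∘ f) :=
    ⟨fun n => hπobs (f n), fun n => by simpa [hπ.2 n] using hπΔ (f n)⟩
  have hobs0 : obs (f 0) = obs 0 :=
    obs_eq_of_mem (hobs _) (hobs 0) (hπ.1 ▸ hπobs (f 0)) (hπobs 0)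
  refine ⟨⟨fun n => hobs (f n), show G.qI ∈ obs (f 0) from hobs0 ▸ hqI, _, hconc⟩, ?_, hconc⟩
  rw [consistent_memoryStrategy_iff] at hcons ⊢
  intro n
  simp only [Function.comp_apply, memSeq_comp hmem, hcons]

theorem winSum_comp {π : ℕ → G.Q} {act : ℕ → G.A} {f : ℕ → ℕ}
    (hf : ∀ n, π (f (n + 1)) = π (f n + 1)) (i j : ℕ) :
    G.winSum (π ∘ f) (act ∘ f) i j = ∑ k ∈ range j, G.stepWeight π act (f (i + k)) :=
  sum_congr rfl fun k _ => by simp [stepWeight, ← hf]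

theorem abs_winSum_le {W : ℕ} (hW : ∀ p σ q, G.Δ p σ q → |G.w p σ q| ≤ (W : ℤ))
    {obs : ℕ → Set G.Q} {act : ℕ → G.A} {π : ℕ → G.Q} (hπ : G.Concretizes obs act π)
    (i j : ℕ) : |G.winSum π act i j| ≤ W * j :=
  calc |G.winSum π act i j|
      ≤ ∑ k ∈ range j, |G.w (π (i + k)) (act (i + k)) (π (i + k + 1))| :=
        abs_sum_le_sum_abs _ _
    _ ≤ ∑ _k ∈ range j, (W : ℤ) := sum_le_sum fun k _ => hW _ _ _ (hπ.2 (i + k))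
    _ = W * j := by simp [mul_comm]

theorem forcesMeanPayoff_of_mpInf_or_mpSup {str : List (Set G.Q × G.A) → Set G.Q → G.A} {ε : ℚ}
    (hwin :
      (∀ obs act, G.IsPlay obs act → G.Consistent str obs act → G.MPInfObj ε obs act) ∨
      (∀ obs act, G.IsPlay obs act → G.Consistent str obs act → G.MPSupObj ε obs act)) :
    G.ForcesMeanPayoff str ε := by
  rintro obs act π ⟨hplay, hcons, hπ⟩ D hD
  rcases hwin with h | h
  · simpa only [MPinf, hD.liminf_eq] using h obs act hplay hcons π hπ
  · simpa only [MPsup, hD.limsup_eq] using h obs act hplay hcons π hπ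

variable {obs : ℕ → Set G.Q} {act : ℕ → G.A} {π : ℕ → G.Q} {ε : ℚ}

theorem ForcesMeanPayoff.mul_le_winSum_of_cycle
    (hforce : G.ForcesMeanPayoff (memoryStrategy m0 αu αo) ε)
    (hout : G.IsOutcome (memoryStrategy m0 αu αo) obs act π) {a ℓ : ℕ} (hℓ : 0 < ℓ)
    (hcyc : (memSeq m0 αu obs (a + ℓ), π (a + ℓ)) = (memSeq m0 αu obs a, π a)) :
    ε * ℓ ≤ G.winSum π act a ℓ := by
  have hf := isSplice_loopIndex (c := fun n => (memSeq m0 αu obs n, π n)) hcyc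
  have hsum : ∀ n, G.winSum (π ∘ loopIndex a ℓ) (act ∘ loopIndex a ℓ) 0 n
      = ∑ k ∈ range n, G.stepWeight π act (loopIndex a ℓ k) := fun n => by
    simp only [winSum_comp hf.snd.2, zero_add]
  have hlim := tendsto_div_atTop_of_add_eq_add (a := a) (C := G.winSum π act a ℓ)
    (S := fun n => G.winSum (π ∘ loopIndex a ℓ) (act ∘ loopIndex a ℓ) 0 n) hℓ fun n hn => by
      have := sum_range_loopIndex_add (G.stepWeight π act) hℓ hn
      rw [← hsum, ← hsum, ← winSum_eq_sum_stepWeight] at this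
      exact_mod_cast this
  have := hforce _ _ _ (hout.comp hf) _ hlim
  rw [le_div_iff₀ (by exact_mod_cast hℓ)] at this
  exact_mod_cast this

theorem ForcesMeanPayoff.le_of_abs_weight_le [Fintype M] {W : ℕ}
    (hW : ∀ p σ q, G.Δ p σ q → |G.w p σ q| ≤ (W : ℤ))
    (hforce : G.ForcesMeanPayoff (memoryStrategy m0 αu αo) ε)
    (hout : G.IsOutcome (memoryStrategy m0 αu αo) obs act π) : ε ≤ W := by
  obtain ⟨a, ℓ, -, hℓ, -, hcyc⟩ :=
    exists_add_eq_of_card_lt (fun n => (memSeq m0 αu obs n, π n)) 0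
  have hcycle := hforce.mul_le_winSum_of_cycle hout hℓ hcyc
  have hbound : (G.winSum π act a ℓ : ℚ) ≤ W * ℓ := by
    exact_mod_cast (abs_le.1 (abs_winSum_le hW hout.2.2 a ℓ)).2
  exact le_of_mul_le_mul_right (hcycle.trans hbound) (by exact_mod_cast hℓ)

theorem ForcesMeanPayoff.winSum_ge [Fintype M] {W : ℕ}
    (hW : ∀ p σ q, G.Δ p σ q → |G.w p σ q| ≤ (W : ℤ)) (hε : 0 ≤ ε)
    (hforce : G.ForcesMeanPayoff (memoryStrategy m0 αu αo) ε) (L : ℕ) :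
    ∀ obs act π, G.IsOutcome (memoryStrategy m0 αu αo) obs act π → ∀ i,
      ε * L - (ε + W) * (Fintype.card (M × G.Q) - 1) ≤ G.winSum π act i L := by
  induction L using Nat.strong_induction_on with
  | _ L ih =>
  intro obs act π hout i
  by_cases hL : L < Fintype.card (M × G.Q)
  · have hLK : (L : ℚ) ≤ Fintype.card (M × G.Q) - 1 := by
      rw [le_sub_iff_add_le]
      exact_mod_cast hL
    have hshort : -(W * L : ℚ) ≤ G.winSum π act i L := by
      exact_mod_cast (abs_le.1 (abs_winSum_le hW hout.2.2 i L)).1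
    nlinarith
  · obtain ⟨a, ℓ, hia, hℓ, haℓ, hcyc⟩ :=
      exists_add_eq_of_card_lt (fun n => (memSeq m0 αu obs n, π n)) i
    obtain ⟨n, rfl⟩ : ∃ n, L = n + ℓ := ⟨L - ℓ, by omega⟩
    have hf := isSplice_skipIndex (c := fun n => (memSeq m0 αu obs n, π n)) hcyc
    have hrest := ih n (by omega) _ _ _ (hout.comp hf) i
    have hcycle := hforce.mul_le_winSum_of_cycle hout hℓ hcyc
    have hsplit : G.winSum (π ∘ skipIndex a ℓ) (act ∘ skipIndex a ℓ) i n
        + G.winSum π act a ℓ = G.winSum π act i (n + ℓ) := by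
      rw [winSum_comp hf.snd.2, winSum_eq_sum_stepWeight]
      exact sum_range_skipIndex_add (G.stepWeight π act) hia (by omega)
    have hsplitQ : (G.winSum (π ∘ skipIndex a ℓ) (act ∘ skipIndex a ℓ) i n : ℚ)
        + G.winSum π act a ℓ = G.winSum π act i (n + ℓ) := by exact_mod_cast hsplit
    push_cast
    linarith

end WGA

theorem add_mul_sub_one_le_mul_of_div_le {ε W K μ : ℚ} (hε : 0 < ε) (hεW : ε ≤ W)
    (hμ : W * K / ε * K ≤ μ) : (ε + W) * (K - 1) ≤ ε * μ := by
  rw [div_mul_eq_mul_div, div_le_iff₀' hε] at hμ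
  nlinarith [sq_nonneg (2 * W * K - (ε + W))]

/-- Theorem 1: a finite-memory strategy of Eve winning for `MPInf(ε)`
(or `MPSup(ε)`) with `ε > 0` is also winning for `DirFix(0, μ)` where
`μ = ⌈(W·|M|·|Q|/ε)·|M|·|Q|⌉`. -/
theorem finite_memory_mp_implies_dirfix (G : WGA) (W : ℕ)
    (hW : ∀ p σ q, G.Δ p σ q → |G.w p σ q| ≤ (W : ℤ))
    (ε : ℚ) (hε : 0 < ε)
    (str : List (Set G.Q × G.A) → Set G.Q → G.A)
    (M : Type) [Fintype M] (m0 : M)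
    (αu : M → Set G.Q → M) (αo : M → Set G.Q → G.A)
    (hmem : ∀ (l : List (Set G.Q × G.A)) (o : Set G.Q),
      str l o = αo (l.foldl (fun m p => αu m p.1) m0) o)
    (hwin :
      (∀ obs act, G.IsPlay obs act → G.Consistent str obs act → G.MPInfObj ε obs act) ∨
      (∀ obs act, G.IsPlay obs act → G.Consistent str obs act → G.MPSupObj ε obs act)) :
    ∀ obs act, G.IsPlay obs act → G.Consistent str obs act →
      G.DirFix 0
        (Nat.ceil ((((W : ℚ) * (Fintype.card M : ℚ) * (Fintype.card G.Q : ℚ)) / ε) *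
          ((Fintype.card M : ℚ) * (Fintype.card G.Q : ℚ)))) obs act := by
  obtain rfl : str = memoryStrategy m0 αu αo := funext₂ hmem
  intro obs act hplay hcons π hπ i
  have hout : G.IsOutcome (memoryStrategy m0 αu αo) obs act π := ⟨hplay, hcons, hπ⟩
  have hforce := WGA.forcesMeanPayoff_of_mpInf_or_mpSup hwin
  have hεW : ε ≤ W := hforce.le_of_abs_weight_le hW hout
  have hK : (Fintype.card (M × G.Q) : ℚ) = Fintype.card M * Fintype.card G.Q := by
    rw [Fintype.card_prod, Nat.cast_mul]
  have hKpos : (0 : ℚ) < Fintype.card M * Fintype.card G.Q := by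
    have := Fintype.card_pos_iff.2 ⟨m0⟩
    have := Fintype.card_pos_iff.2 ⟨G.qI⟩
    positivity
  have hμ := Nat.le_ceil ((((W : ℚ) * (Fintype.card M : ℚ) * (Fintype.card G.Q : ℚ)) / ε) *
    ((Fintype.card M : ℚ) * (Fintype.card G.Q : ℚ)))
  rw [mul_assoc (W : ℚ)] at hμ ⊢
  refine ⟨_, Nat.one_le_ceil_iff.2 ?_, le_rfl, div_nonneg ?_ (Nat.cast_nonneg _)⟩
  · exact mul_pos (div_pos (mul_pos (hε.trans_le hεW) hKpos) hε) hKpos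
  · refine le_trans ?_ (hforce.winSum_ge hW hε.le _ obs act π hout i)
    rw [hK]
    linarith [add_mul_sub_one_le_mul_of_div_le hε hεW hμ]
end

section
/- Let ρ = o_0σ_0o_1…o_n be an abstract path of a WGA G, let lmax ≥ 1, let φ ∈ 𝓕 with supp(φ) ⊆ o_0, and let supp⁻¹(ρ,φ) = f_0σ_0f_1…f_n. Let p ∈ supp(f_n) and 1 ≤ l ≤ lmax with l ≤ n. Then f_n(p)_l < 0 if and only if a window of length l is open at p, i.e., there exists a concrete path q_0σ_0q_1…q_n with q_i ∈ o_i for all i, q_0 ∈ supp(φ) and q_n = p, such that Σ_{j=n−l}^{m} w(q_j,σ_j,q_{j+1}) < 0 for every m with n−l ≤ m < n. -/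
open scoped Classical

namespace WGA

variable (G : WGA)

/-- Elements of the function space 𝓕 (validity constraints are given by `ValidF`). -/
def FMap := G.Q → Option (ℕ → ℤ)

/-- The support of an element of 𝓕. -/
def fsupp (f : FMap G) : Set G.Q := {q | f q ≠ none}

/-- `f(q)_i`, the value of `f` at state `q` and window index `i`. -/
def fval (f : FMap G) (q : G.Q) (i : ℕ) : ℤ := ((f q).getD fun _ => 0) i

/-- Membership in 𝓕: values at indices `1,…,lmax` lie in `{−W·lmax,…,0}`
(values at other indices are normalized to `0`). -/
def ValidF (lmax W : ℕ) (f : FMap G) : Prop :=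
  ∀ q g, f q = some g →
    (∀ i, 1 ≤ i → i ≤ lmax → -((W : ℤ) * (lmax : ℤ)) ≤ g i ∧ g i ≤ 0) ∧
    (∀ i, i = 0 ∨ lmax < i → g i = 0)

def Fset (lmax W : ℕ) : Set (FMap G) := {f | G.ValidF lmax W f}

/-- The set whose minimum is `ζ(q)` in the definition of σ-successor. -/
def zetaSet (f1 : FMap G) (σ : G.A) (q : G.Q) (j : ℕ) : Set ℤ :=
  if j = 1 then {x | ∃ p ∈ G.fsupp f1, G.Δ p σ q ∧ x = G.w p σ q}
  else {x | ∃ p ∈ G.fsupp f1, G.Δ p σ q ∧ G.fval f1 p (j - 1) < 0 ∧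
        x = G.fval f1 p (j - 1) + G.w p σ q}

/-- `v = max(−W·lmax, min(0, min Z))`, where the minimum of the empty set is `+∞`. -/
def succVal (lmax W : ℕ) (Z : Set ℤ) (v : ℤ) : Prop :=
  (Z = ∅ ∧ v = max (-((W : ℤ) * (lmax : ℤ))) 0) ∨
  ∃ z, IsLeast Z z ∧ v = max (-((W : ℤ) * (lmax : ℤ))) (min 0 z)

/-- `f2` is a σ-successor of `f1`. -/
def IsSucc (lmax W : ℕ) (f1 : FMap G) (σ : G.A) (f2 : FMap G) : Prop :=
  G.ValidF lmax W f2 ∧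
  (∃ o ∈ G.Obs, G.fsupp f2 = G.postSet σ (G.fsupp f1) ∩ o) ∧
  ∀ q ∈ G.fsupp f2, ∀ j, 1 ≤ j → j ≤ lmax →
    succVal lmax W (G.zetaSet f1 σ q j) (G.fval f2 q j)

/-- The initial function `f_I`. -/
noncomputable def fI : FMap G := fun q => if q = G.qI then some (fun _ => 0) else none

/-- The unsafe set 𝒰 ⊆ 𝓕. -/
def FU (lmax W : ℕ) : Set (FMap G) :=
  {f | G.ValidF lmax W f ∧ ∃ q ∈ G.fsupp f, G.fval f q lmax < 0}

/-- The partial order ⪯ on 𝓕. -/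
def Preceq (lmax : ℕ) (f g : FMap G) : Prop :=
  G.fsupp f ⊆ G.fsupp g ∧
  ∀ q ∈ G.fsupp f, ∀ i, 1 ≤ i → i ≤ lmax →
    ∃ j, i ≤ j ∧ j ≤ lmax ∧ G.fval g q j ≤ G.fval f q i

/-- Upward-closedness (within 𝓕) with respect to ⪯. -/
def UpClosed (lmax W : ℕ) (S : Set (FMap G)) : Prop :=
  ∀ f ∈ S, ∀ g ∈ G.Fset lmax W, G.Preceq lmax f g → g ∈ S

/-- Uncontrollable predecessors in the game `G'`. -/
def upreF (lmax W : ℕ) (S : Set (FMap G)) : Set (FMap G) :=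
  {p | G.ValidF lmax W p ∧ ∀ σ : G.A, ∃ f2 ∈ S, G.IsSucc lmax W p σ f2}

/-- The set of ⪯-minimal elements of `T`. -/
def minimal (lmax : ℕ) (T : Set (FMap G)) : Set (FMap G) :=
  {x | x ∈ T ∧ ∀ y ∈ T, G.Preceq lmax y x → y = x}

/-- The antichain version ⌊upre⌋ of the uncontrollable-predecessors operator. -/
def acUpre (lmax W : ℕ) (a : Set (FMap G)) : Set (FMap G) :=
  G.minimal lmax {p | G.ValidF lmax W p ∧ p ∉ G.FU lmax W ∧
    ∀ σ : G.A, ∃ q' ∈ a, ∃ r', G.IsSucc lmax W p σ r' ∧ G.Preceq lmax q' r'}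

/-- Upward closure within 𝓕. -/
def upSet (lmax W : ℕ) (T : Set (FMap G)) : Set (FMap G) :=
  {g | g ∈ G.Fset lmax W ∧ ∃ f ∈ T, G.Preceq lmax f g}

/-- Histories of the perfect-information game `G'`. -/
def histP (fs : ℕ → FMap G) (act : ℕ → G.A) (n : ℕ) : List (FMap G × G.A) :=
  (List.range n).map fun i => (fs i, act i)

/-- The given strategy of Eve is winning for the safety objective of `G'`:
every consistent play (a sequence of σ-successor moves from `f_I`) avoids 𝒰. -/
def WinsSafeP (lmax W : ℕ) (str : List (FMap G × G.A) → FMap G → G.A) : Prop :=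
  ∀ fs : ℕ → FMap G, ∀ act : ℕ → G.A,
    fs 0 = G.fI →
    (∀ i, G.IsSucc lmax W (fs i) (act i) (fs (i + 1))) →
    (∀ n, act n = str (G.histP fs act n) (fs n)) →
    ∀ i, fs i ∉ G.FU lmax W

/-- The monotone map `X ↦ 𝒰 ∪ upre(X)` on the powerset lattice of 𝓕. -/
def safeOp (lmax W : ℕ) : Set (FMap G) →o Set (FMap G) where
  toFun X := G.FU lmax W ∪ G.upreF lmax W X
  monotone' := by
    intro X Y hXY f hf
    rcases hf with hf | hf
    · exact Or.inl hf
    · refine Or.inr ⟨hf.1, fun σ => ?_⟩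
      obtain ⟨f2, hf2, hs⟩ := hf.2 σ
      exact ⟨f2, hXY hf2, hs⟩

end WGA

/-! Unfolding the successor relation `j` times, `f_{s+j}(q)_j < 0` is witnessed by a chain of
minimizing predecessors (the argmins of `ζ`): a path through the supports whose partial sums from
position `s` are all negative and whose total weight is at most `f_{s+j}(q)_j`. Conversely, along
any such path the value is at most the total weight, because a window of length `j ≤ lmax` weighs
at least `−W·lmax`, so the clamping never hides a negative sum. Paths through the supports are
exactly the concrete paths along the observations that start in `supp(φ)`: each support is the
part of the successors of the previous one that lies in the next observation, and all supports are
nonempty since `p` is reached from `supp(φ)`. -/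

namespace WGA

variable {G : WGA} {lmax W : ℕ}

section Successor

variable {Z : Set ℤ} {f₁ f₂ : FMap G} {σ : G.A} {p q : G.Q} {j : ℕ}

theorem succVal_le_max_of_mem {v x : ℤ} (h : succVal lmax W Z v) (hx : x ∈ Z) :
    v ≤ max (-((W : ℤ) * lmax)) x := by
  rcases h with ⟨rfl, -⟩ | ⟨z, hz, rfl⟩
  · exact absurd hx (Set.notMem_empty x)
  · exact max_le_max le_rfl ((min_le_right 0 z).trans (hz.2 hx))

theorem exists_mem_le_of_succVal_neg {v : ℤ} (h : succVal lmax W Z v) (hv : v < 0) :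
    ∃ x ∈ Z, x ≤ v := by
  rcases h with ⟨-, rfl⟩ | ⟨z, hz, rfl⟩
  · omega
  · exact ⟨z, hz.1, by omega⟩

theorem IsSucc.fval_one_le (h : G.IsSucc lmax W f₁ σ f₂) (hq : q ∈ G.fsupp f₂)
    (hl : 1 ≤ lmax) (hp : p ∈ G.fsupp f₁) (hΔ : G.Δ p σ q) :
    G.fval f₂ q 1 ≤ max (-((W : ℤ) * lmax)) (G.w p σ q) :=
  succVal_le_max_of_mem (h.2.2 q hq 1 le_rfl hl) (by
    rw [zetaSet, if_pos rfl]
    exact ⟨p, hp, hΔ, rfl⟩)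

theorem IsSucc.fval_succ_le (h : G.IsSucc lmax W f₁ σ f₂) (hq : q ∈ G.fsupp f₂)
    (hj : 1 ≤ j) (hjl : j + 1 ≤ lmax) (hp : p ∈ G.fsupp f₁) (hΔ : G.Δ p σ q)
    (hneg : G.fval f₁ p j < 0) :
    G.fval f₂ q (j + 1) ≤ max (-((W : ℤ) * lmax)) (G.fval f₁ p j + G.w p σ q) :=
  succVal_le_max_of_mem (h.2.2 q hq (j + 1) (by omega) hjl) (by
    rw [zetaSet, if_neg (by omega)]
    exact ⟨p, hp, hΔ, hneg, rfl⟩)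

theorem IsSucc.exists_pred_of_fval_one_neg (h : G.IsSucc lmax W f₁ σ f₂)
    (hq : q ∈ G.fsupp f₂) (hl : 1 ≤ lmax) (hneg : G.fval f₂ q 1 < 0) :
    ∃ p ∈ G.fsupp f₁, G.Δ p σ q ∧ G.w p σ q ≤ G.fval f₂ q 1 := by
  obtain ⟨x, hx, hxv⟩ := exists_mem_le_of_succVal_neg (h.2.2 q hq 1 le_rfl hl) hneg
  rw [zetaSet, if_pos rfl] at hx
  obtain ⟨p, hp, hΔ, rfl⟩ := hx
  exact ⟨p, hp, hΔ, hxv⟩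

theorem IsSucc.exists_pred_of_fval_succ_neg (h : G.IsSucc lmax W f₁ σ f₂)
    (hq : q ∈ G.fsupp f₂) (hj : 1 ≤ j) (hjl : j + 1 ≤ lmax)
    (hneg : G.fval f₂ q (j + 1) < 0) :
    ∃ p ∈ G.fsupp f₁, G.Δ p σ q ∧ G.fval f₁ p j < 0 ∧
      G.fval f₁ p j + G.w p σ q ≤ G.fval f₂ q (j + 1) := by
  obtain ⟨x, hx, hxv⟩ :=
    exists_mem_le_of_succVal_neg (h.2.2 q hq (j + 1) (by omega) hjl) hneg
  rw [zetaSet, if_neg (by omega)] at hx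
  obtain ⟨p, hp, hΔ, hpneg, rfl⟩ := hx
  exact ⟨p, hp, hΔ, hpneg, hxv⟩

theorem IsSucc.fsupp_subset_postSet (h : G.IsSucc lmax W f₁ σ f₂) :
    G.fsupp f₂ ⊆ G.postSet σ (G.fsupp f₁) := by
  obtain ⟨o, -, ho⟩ := h.2.1
  exact ho ▸ Set.inter_subset_left

/-- Since `Obs` is a partition, any state of `supp(f₂)` pins down the observation that the
successor relation intersects with. -/
theorem IsSucc.mem_fsupp (h : G.IsSucc lmax W f₁ σ f₂) {o : Set G.Q} (ho : o ∈ G.Obs)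
    (hsub : G.fsupp f₂ ⊆ o) (hne : (G.fsupp f₂).Nonempty) (hp : p ∈ G.fsupp f₁)
    (hΔ : G.Δ p σ q) (hqo : q ∈ o) : q ∈ G.fsupp f₂ := by
  obtain ⟨o', ho', hsupp⟩ := h.2.1
  obtain ⟨r, hr⟩ := hne
  have hro' : r ∈ o' := (hsupp ▸ hr).2
  have ho'o : o' = o := (G.obs_partition r).unique ⟨ho', hro'⟩ ⟨ho, hsub hr⟩
  rw [hsupp, ho'o]
  exact ⟨⟨p, hp, hΔ⟩, hqo⟩

end Successor

section Windows

variable {c : ℕ → G.Q} {act : ℕ → G.A} {s j t : ℕ} {q : G.Q}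

def IsOpenWindow (c : ℕ → G.Q) (act : ℕ → G.A) (s j : ℕ) : Prop :=
  ∀ m, 1 ≤ m → m ≤ j → G.winSum c act s m < 0

theorem winSum_succ :
    G.winSum c act s (j + 1) = G.winSum c act s j + G.w (c (s + j)) (act (s + j)) (c (s + j + 1)) :=
  Finset.sum_range_succ _ _

theorem sum_Icc_eq_winSum (m : ℕ) :
    ∑ i ∈ Finset.Icc s m, G.w (c i) (act i) (c (i + 1)) = G.winSum c act s (m + 1 - s) := by
  rw [← Finset.Ico_add_one_right_eq_Icc, Finset.sum_Ico_eq_sum_range, winSum]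

theorem neg_mul_le_winSum (hW : ∀ p σ q, G.Δ p σ q → |G.w p σ q| ≤ (W : ℤ)) {k : ℕ}
    (hjk : j ≤ k) (hΔ : ∀ i, s ≤ i → i < s + j → G.Δ (c i) (act i) (c (i + 1))) :
    -((W : ℤ) * k) ≤ G.winSum c act s j := by
  have hWj : (W : ℤ) * j ≤ W * k :=
    mul_le_mul_of_nonneg_left (by exact_mod_cast hjk) (by positivity)
  calc -((W : ℤ) * k) ≤ ∑ _i ∈ Finset.range j, -(W : ℤ) := by
        rw [Finset.sum_const, Finset.card_range, nsmul_eq_mul]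
        linarith
    _ ≤ G.winSum c act s j := Finset.sum_le_sum fun i hi =>
        (abs_le.mp (hW _ _ _ (hΔ (s + i) (by omega) (by have := Finset.mem_range.mp hi; omega)))).1

theorem winSum_update_of_le (h : s + j ≤ t) :
    G.winSum (Function.update c (t + 1) q) act s j = G.winSum c act s j :=
  Finset.sum_congr rfl fun i hi => by
    simp only [Finset.mem_range] at hi
    rw [Function.update_of_ne (by omega), Function.update_of_ne (by omega)]

theorem isOpenWindow_update_iff (h : s + j ≤ t) :
    IsOpenWindow (Function.update c (t + 1) q) act s j ↔ IsOpenWindow c act s j :=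
  forall_congr' fun m => imp_congr_right fun _ => imp_congr_right fun hm => by
    rw [winSum_update_of_le (by omega)]

theorem isOpenWindow_succ_iff :
    IsOpenWindow c act s (j + 1) ↔ IsOpenWindow c act s j ∧ G.winSum c act s (j + 1) < 0 := by
  refine ⟨fun h => ⟨fun m hm hmj => h m hm (by omega), h (j + 1) (by omega) le_rfl⟩,
    fun ⟨h, hlast⟩ m hm hmj => ?_⟩
  rcases Nat.lt_or_eq_of_le hmj with hmj | rfl
  exacts [h m hm (by omega), hlast]

theorem isOpenWindow_iff_sum_Icc :
    IsOpenWindow c act s j ↔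
      ∀ m, s ≤ m → m < s + j →
        ∑ i ∈ Finset.Icc s m, G.w (c i) (act i) (c (i + 1)) < 0 := by
  simp only [sum_Icc_eq_winSum]
  refine ⟨fun h m hsm hmj => h _ (by omega) (by omega), fun h m hm hmj => ?_⟩
  simpa [show s + m - 1 + 1 - s = m by omega] using h (s + m - 1) (by omega) (by omega)

end Windows

section Paths

variable {fs : ℕ → FMap G} {act : ℕ → G.A} {c : ℕ → G.Q} {n s j t : ℕ} {q : G.Q}

def IsSuppPath (fs : ℕ → FMap G) (act : ℕ → G.A) (c : ℕ → G.Q) (t : ℕ) : Prop :=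
  (∀ i ≤ t, c i ∈ G.fsupp (fs i)) ∧ ∀ i < t, G.Δ (c i) (act i) (c (i + 1))

theorem IsSuppPath.mono {t' : ℕ} (hc : G.IsSuppPath fs act c t) (ht : t' ≤ t) :
    G.IsSuppPath fs act c t' :=
  ⟨fun i hi => hc.1 i (hi.trans ht), fun i hi => hc.2 i (by omega)⟩

theorem IsSuppPath.update_succ (hc : G.IsSuppPath fs act c t) (hq : q ∈ G.fsupp (fs (t + 1)))
    (hΔ : G.Δ (c t) (act t) q) : G.IsSuppPath fs act (Function.update c (t + 1) q) (t + 1) := by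
  refine ⟨fun i hi => ?_, fun i hi => ?_⟩
  · rcases Nat.lt_or_eq_of_le hi with hi | rfl
    · rw [Function.update_of_ne (by omega)]
      exact hc.1 i (by omega)
    · rwa [Function.update_self]
  · rw [Function.update_of_ne (by omega)]
    rcases Nat.lt_or_eq_of_le (Nat.le_of_lt_succ hi) with hi | rfl
    · rw [Function.update_of_ne (by omega)]
      exact hc.2 i hi
    · rwa [Function.update_self]

theorem exists_isSuppPath_of_mem_fsupp
    (hchain : ∀ i < n, G.IsSucc lmax W (fs i) (act i) (fs (i + 1)))
    (ht : t ≤ n) (hq : q ∈ G.fsupp (fs t)) : ∃ c, G.IsSuppPath fs act c t ∧ c t = q := by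
  induction t generalizing q with
  | zero => exact ⟨fun _ => q, ⟨fun i hi => by rwa [Nat.le_zero.mp hi], by simp⟩, rfl⟩
  | succ t ih =>
    obtain ⟨p, hp, hΔ⟩ := (hchain t (by omega)).fsupp_subset_postSet hq
    obtain ⟨c, hc, rfl⟩ := ih (by omega) hp
    exact ⟨_, hc.update_succ hq hΔ, Function.update_self ..⟩

theorem isSuppPath_of_mem_obs {obs : ℕ → Set G.Q}
    (hchain : ∀ i < n, G.IsSucc lmax W (fs i) (act i) (fs (i + 1)))
    (hobs : ∀ i ≤ n, obs i ∈ G.Obs) (hsub : ∀ i ≤ n, G.fsupp (fs i) ⊆ obs i)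
    (hne : ∀ i ≤ n, (G.fsupp (fs i)).Nonempty) (hc0 : c 0 ∈ G.fsupp (fs 0))
    (hcobs : ∀ i ≤ n, c i ∈ obs i) (hcΔ : ∀ i < n, G.Δ (c i) (act i) (c (i + 1))) :
    G.IsSuppPath fs act c n := by
  refine ⟨fun i hi => ?_, hcΔ⟩
  induction i with
  | zero => exact hc0
  | succ i ih =>
    exact (hchain i (by omega)).mem_fsupp (hobs _ hi) (hsub _ hi) (hne _ hi) (ih (by omega))
      (hcΔ i (by omega)) (hcobs _ hi)

theorem fval_le_winSum (hW : ∀ p σ q, G.Δ p σ q → |G.w p σ q| ≤ (W : ℤ))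
    (hchain : ∀ i < n, G.IsSucc lmax W (fs i) (act i) (fs (i + 1)))
    (hj : 1 ≤ j) (hjl : j ≤ lmax) (hsn : s + j ≤ n)
    (hc : G.IsSuppPath fs act c (s + j)) (hopen : G.IsOpenWindow c act s j) :
    G.fval (fs (s + j)) (c (s + j)) j ≤ G.winSum c act s j := by
  have hbound : -((W : ℤ) * lmax) ≤ G.winSum c act s j :=
    neg_mul_le_winSum hW hjl fun i _ hi => hc.2 i hi
  induction j, hj using Nat.le_induction with
  | base =>
    have hstep := (hchain s (by omega)).fval_one_le (hc.1 _ le_rfl) hjl (hc.1 s (by omega))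
      (hc.2 s (by omega))
    simp only [winSum, Finset.sum_range_one, Nat.add_zero] at hbound ⊢
    omega
  | succ j hj ih =>
    rw [isOpenWindow_succ_iff] at hopen
    have hprev := ih (by omega) (by omega) (hc.mono (by omega)) hopen.1
      (neg_mul_le_winSum hW (by omega) fun i _ hi => hc.2 i (by omega))
    have hstep := (hchain (s + j) (by omega)).fval_succ_le (hc.1 _ le_rfl) hj hjl
      (hc.1 (s + j) (by omega)) (hc.2 (s + j) (by omega))
      (hprev.trans_lt (hopen.1 j hj le_rfl))
    rw [winSum_succ] at hbound ⊢
    rw [← Nat.add_assoc]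
    omega

theorem exists_isOpenWindow_of_fval_neg
    (hchain : ∀ i < n, G.IsSucc lmax W (fs i) (act i) (fs (i + 1)))
    (hj : 1 ≤ j) (hjl : j ≤ lmax) (hsn : s + j ≤ n)
    (hq : q ∈ G.fsupp (fs (s + j))) (hneg : G.fval (fs (s + j)) q j < 0) :
    ∃ c, G.IsSuppPath fs act c (s + j) ∧ c (s + j) = q ∧ G.IsOpenWindow c act s j ∧
      G.winSum c act s j ≤ G.fval (fs (s + j)) q j := by
  induction j, hj using Nat.le_induction generalizing q with
  | base =>
    obtain ⟨p, hp, hΔ, hw⟩ := (hchain s (by omega)).exists_pred_of_fval_one_neg hq hjl hneg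
    obtain ⟨c, hc, rfl⟩ := exists_isSuppPath_of_mem_fsupp hchain (by omega) hp
    have hsum : G.winSum (Function.update c (s + 1) q) act s 1 = G.w (c s) (act s) q := by
      simp [winSum]
    refine ⟨_, hc.update_succ hq hΔ, Function.update_self .., ?_, hsum ▸ hw⟩
    intro m hm hm1
    rw [show m = 1 by omega, hsum]
    omega
  | succ j hj ih =>
    rw [← Nat.add_assoc] at hq hneg ⊢
    obtain ⟨p, hp, hΔ, hpneg, hw⟩ :=
      (hchain (s + j) (by omega)).exists_pred_of_fval_succ_neg hq hj hjl hneg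
    obtain ⟨c, hc, rfl, hopen, hsum⟩ := ih (by omega) (by omega) hp hpneg
    have hsum' : G.winSum (Function.update c (s + j + 1) q) act s (j + 1) =
        G.winSum c act s j + G.w (c (s + j)) (act (s + j)) q := by
      rw [winSum_succ, winSum_update_of_le le_rfl, Function.update_self,
        Function.update_of_ne (by omega)]
    refine ⟨_, hc.update_succ hq hΔ, Function.update_self .., ?_, by omega⟩
    rw [isOpenWindow_succ_iff, isOpenWindow_update_iff le_rfl]
    exact ⟨hopen, by omega⟩

end Paths

end WGA

theorem open_window_iff_fval_neg_general (G : WGA) (lmax W : ℕ)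
    (hW : ∀ p σ q, G.Δ p σ q → |G.w p σ q| ≤ (W : ℤ))
    (n : ℕ) (obs : ℕ → Set G.Q) (act : ℕ → G.A)
    (hobs : ∀ i, i ≤ n → obs i ∈ G.Obs)
    (φ : WGA.FMap G) (hφ0 : G.fsupp φ ⊆ obs 0)
    (fs : ℕ → WGA.FMap G) (hf0 : fs 0 = φ)
    (hsucc : ∀ i, i < n →
      G.IsSucc lmax W (fs i) (act i) (fs (i + 1)) ∧ G.fsupp (fs (i + 1)) ⊆ obs (i + 1))
    (p : G.Q) (hp : p ∈ G.fsupp (fs n)) (l : ℕ) (hl1 : 1 ≤ l) (hllmax : l ≤ lmax)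
    (hln : l ≤ n) :
    G.fval (fs n) p l < 0 ↔
      ∃ c : ℕ → G.Q, (∀ i, i ≤ n → c i ∈ obs i) ∧
        (∀ i, i < n → G.Δ (c i) (act i) (c (i + 1))) ∧
        c 0 ∈ G.fsupp φ ∧ c n = p ∧
        ∀ m, n - l ≤ m → m < n →
          (∑ j ∈ Finset.Icc (n - l) m, G.w (c j) (act j) (c (j + 1))) < 0 := by
  subst hf0
  have hchain i (hi : i < n) := (hsucc i hi).1
  have hsub : ∀ i ≤ n, G.fsupp (fs i) ⊆ obs i := by
    rintro (_ | i) hi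
    exacts [hφ0, (hsucc i (by omega)).2]
  obtain ⟨s, rfl⟩ : ∃ s, n = s + l := ⟨n - l, by omega⟩
  simp only [Nat.add_sub_cancel, ← WGA.isOpenWindow_iff_sum_Icc]
  constructor
  · intro hneg
    obtain ⟨c, hc, rfl, hopen, -⟩ :=
      WGA.exists_isOpenWindow_of_fval_neg hchain hl1 hllmax le_rfl hp hneg
    exact ⟨c, fun i hi => hsub i hi (hc.1 i hi), hc.2, hc.1 0 (Nat.zero_le _), rfl, hopen⟩
  · rintro ⟨c, hcobs, hcΔ, hc0, rfl, hopen⟩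
    obtain ⟨d, hd, -⟩ := WGA.exists_isSuppPath_of_mem_fsupp hchain le_rfl hp
    have hc := WGA.isSuppPath_of_mem_obs hchain hobs hsub (fun i hi => ⟨d i, hd.1 i hi⟩) hc0
      hcobs hcΔ
    exact (WGA.fval_le_winSum hW hchain hl1 hllmax le_rfl hc hopen).trans_lt (hopen l hl1 le_rfl)

/-- Lemma 4: `f_n(p)_l < 0` iff a window of length `l` is open at `p`. -/
theorem open_window_iff_fval_neg (G : WGA) (lmax W : ℕ) (hlmax : 1 ≤ lmax)
    (hW : ∀ p σ q, G.Δ p σ q → |G.w p σ q| ≤ (W : ℤ))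
    (n : ℕ) (obs : ℕ → Set G.Q) (act : ℕ → G.A)
    (hobs : ∀ i, i ≤ n → obs i ∈ G.Obs)
    (habs : ∃ c : ℕ → G.Q, (∀ i, i ≤ n → c i ∈ obs i) ∧
      ∀ i, i < n → G.Δ (c i) (act i) (c (i + 1)))
    (φ : WGA.FMap G) (hφ : G.ValidF lmax W φ) (hφ0 : G.fsupp φ ⊆ obs 0)
    (fs : ℕ → WGA.FMap G) (hf0 : fs 0 = φ)
    (hsucc : ∀ i, i < n →
      G.IsSucc lmax W (fs i) (act i) (fs (i + 1)) ∧ G.fsupp (fs (i + 1)) ⊆ obs (i + 1))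
    (p : G.Q) (hp : p ∈ G.fsupp (fs n)) (l : ℕ) (hl1 : 1 ≤ l) (hllmax : l ≤ lmax)
    (hln : l ≤ n) :
    G.fval (fs n) p l < 0 ↔
      ∃ c : ℕ → G.Q, (∀ i, i ≤ n → c i ∈ obs i) ∧
        (∀ i, i < n → G.Δ (c i) (act i) (c (i + 1))) ∧
        c 0 ∈ G.fsupp φ ∧ c n = p ∧
        ∀ m, n - l ≤ m → m < n →
          (∑ j ∈ Finset.Icc (n - l) m, G.w (c j) (act j) (c (j + 1))) < 0 :=
  open_window_iff_fval_neg_general G lmax W hW n obs act hobs φ hφ0 fs hf0 hsucc p hp l hl1 hllmax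
    hln
end
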